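/- arXiv:2005.06878 — 5 statements merged into one kernel-verified Lean document; each statement's English description precedes it below -/
import Mathlib

section
/- Let Λ be a column-stochastic n×n matrix with zero diagonal, and let q ∈ ℝ^n with q ≥ 0. Then there exists a maximum solution x* to Λx = x subject to 0 ≤ x ≤ q; that is, x* satisfies Λx* = x*, 0 ≤ x* ≤ q, and for every other solution x with Λx = x and x ≤ q, x ≤ x* componentwise. -/
/-- Existence of a maximum solution x* to Λx = x subject to 0 ≤ x ≤ q,
for a column-stochastic matrix Λ with zero diagonal. -/
theorem stmt1 (n : ℕ) (Λ : Matrix (Fin n) (Fin n) ℝ)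
    (hent : ∀ i j, Λ i j ∈ Set.Icc (0:ℝ) 1)
    (hdiag : ∀ i, Λ i i = 0)
    (hcol : ∀ j, ∑ i, Λ i j = 1)
    (q : Fin n → ℝ) (hq : 0 ≤ q) :
    ∃ xs : Fin n → ℝ, Λ.mulVec xs = xs ∧ 0 ≤ xs ∧ xs ≤ q ∧
      ∀ x : Fin n → ℝ, Λ.mulVec x = x → x ≤ q → x ≤ xs := by
  have hnn : ∀ i j, 0 ≤ Λ i j := fun i j => (hent i j).1
  -- the pointwise max of two fixed points is a fixed point
  have key : ∀ x y : Fin n → ℝ, Λ.mulVec x = x → Λ.mulVec y = y →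
      Λ.mulVec (fun i => max (x i) (y i)) = fun i => max (x i) (y i) := by
    intro x y hx hy
    set z : Fin n → ℝ := fun i => max (x i) (y i) with hz
    have hle : ∀ i, z i ≤ Λ.mulVec z i := by
      intro i
      have hxz : Λ.mulVec x i ≤ Λ.mulVec z i := by
        simp only [Matrix.mulVec, dotProduct]
        exact Finset.sum_le_sum fun j _ =>
          mul_le_mul_of_nonneg_left (le_max_left _ _) (hnn i j)
      have hyz : Λ.mulVec y i ≤ Λ.mulVec z i := by
        simp only [Matrix.mulVec, dotProduct]
        exact Finset.sum_le_sum fun j _ =>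
          mul_le_mul_of_nonneg_left (le_max_right _ _) (hnn i j)
      have hx' : x i ≤ Λ.mulVec z i := by rw [← congrFun hx i] at *; exact hxz
      have hy' : y i ≤ Λ.mulVec z i := by rw [← congrFun hy i] at *; exact hyz
      exact max_le hx' hy'
    have hsum : ∑ i, Λ.mulVec z i = ∑ i, z i := by
      simp only [Matrix.mulVec, dotProduct]
      rw [Finset.sum_comm]
      refine Finset.sum_congr rfl fun j _ => ?_
      rw [← Finset.sum_mul, hcol j, one_mul]
    have h0 : ∑ i, (Λ.mulVec z i - z i) = 0 := by
      rw [Finset.sum_sub_distrib, hsum, sub_self]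
    have hall := (Finset.sum_eq_zero_iff_of_nonneg
      (fun i _ => sub_nonneg.2 (hle i))).1 h0
    funext i
    have := hall i (Finset.mem_univ i)
    show Λ.mulVec z i = z i
    linarith
  set S : Set (Fin n → ℝ) := {x | Λ.mulVec x = x ∧ x ∈ Set.Icc 0 q} with hSdef
  have hS0 : (0 : Fin n → ℝ) ∈ S := ⟨Matrix.mulVec_zero Λ, le_refl _, hq⟩
  have hcont : Continuous fun x : Fin n → ℝ => Λ.mulVec x := by
    apply continuous_pi; intro i
    simp only [Matrix.mulVec, dotProduct]
    exact continuous_finset_sum _ fun j _ => continuous_const.mul (continuous_apply j)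
  have hclosed : IsClosed S := by
    have : S = {x | Λ.mulVec x = x} ∩ Set.Icc 0 q := rfl
    rw [this]
    exact (isClosed_eq hcont continuous_id).inter isClosed_Icc
  have hcomp : IsCompact S :=
    (isCompact_Icc : IsCompact (Set.Icc (0 : Fin n → ℝ) q)).of_isClosed_subset
      hclosed (fun x hx => hx.2)
  obtain ⟨xs, hxsS, hmax⟩ := hcomp.exists_isMaxOn ⟨0, hS0⟩
    (continuous_finset_sum Finset.univ fun i _ => continuous_apply i).continuousOn
  refine ⟨xs, hxsS.1, hxsS.2.1, hxsS.2.2, ?_⟩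
  intro x hx hxq
  set z : Fin n → ℝ := fun i => max (x i) (xs i) with hzdef
  have hzS : z ∈ S := by
    refine ⟨key x xs hx hxsS.1, fun i => ?_, fun i => ?_⟩
    · exact le_trans (hxsS.2.1 i) (le_max_right _ _)
    · exact max_le (hxq i) (hxsS.2.2 i)
  have hsum : ∑ i, z i ≤ ∑ i, xs i := hmax hzS
  have hzeq : ∀ i, z i = xs i := by
    intro i
    have h0 : ∑ j, (z j - xs j) ≤ 0 := by rw [Finset.sum_sub_distrib]; linarith
    have hnn' : ∀ j ∈ Finset.univ, (0:ℝ) ≤ z j - xs j :=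
      fun j _ => sub_nonneg.2 (le_max_right _ _)
    have h0' : ∑ j, (z j - xs j) = 0 :=
      le_antisymm h0 (Finset.sum_nonneg hnn')
    have := (Finset.sum_eq_zero_iff_of_nonneg hnn').1 h0' i (Finset.mem_univ i)
    linarith
  intro i
  calc x i ≤ z i := le_max_left _ _
    _ = xs i := hzeq i
end

section
/- Let D be an n×n matrix with entries in [0,1], zero diagonal, and all column sums at most 1. Suppose D is 'unisolated', meaning not every column of D sums to 1, and suppose that D contains no strict nonempty subset V such that the principal submatrix D_V is both isolated within D and irreducible. Then det(I − D) ≠ 0, i.e., I − D has full rank n. -/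
/-! Read `D` as a substochastic transition matrix (column `j` holds the exit weights of state `j`).
If `det (1 - D) = 0`, some `x ≠ 0` satisfies `x ᵥ* D = x`, i.e. each `x j` is a substochastic
average of the `x i`. At a coordinate where `|x|` is maximal this average must be exact, so the
set `S` of such coordinates has columns summing to `1` and receives no weight from outside:
it is isolated, and by unisolatedness `S ≠ univ`. A minimal nonempty isolated subset of `S`
is then irreducible, contradicting the hypothesis. -/

open Finset

namespace Matrix

variable {ι α : Type*} [DecidableEq ι] [Zero α]

/-- `D_V` is isolated within `D_W`; being isolated in `D` is the case `W = univ`. -/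
def IsIsolatedIn (D : Matrix ι ι α) (W V : Finset ι) : Prop :=
  ∀ v ∈ W \ V, ∀ u ∈ V, D v u = 0

def IsIrreducibleIn (D : Matrix ι ι α) (V : Finset ι) : Prop :=
  ∀ V' ⊆ V, V'.Nonempty → V' ≠ V → ¬ IsIsolatedIn D V V'

variable {D : Matrix ι ι α}

theorem IsIsolatedIn.trans {W V V' : Finset ι} (hV : IsIsolatedIn D W V)
    (hV' : IsIsolatedIn D V V') (hsub : V' ⊆ V) : IsIsolatedIn D W V' := by
  intro v hv u hu
  obtain ⟨hvW, hvV'⟩ := mem_sdiff.mp hv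
  by_cases hvV : v ∈ V
  · exact hV' v (mem_sdiff.mpr ⟨hvV, hvV'⟩) u hu
  · exact hV v (mem_sdiff.mpr ⟨hvW, hvV⟩) u (hsub hu)

theorem IsIsolatedIn.exists_subset_isIrreducibleIn {W V : Finset ι} (hV : IsIsolatedIn D W V)
    (hne : V.Nonempty) :
    ∃ U ⊆ V, U.Nonempty ∧ IsIsolatedIn D W U ∧ IsIrreducibleIn D U := by
  induction V using Finset.strongInduction with
  | H V ih =>
    by_cases hirr : IsIrreducibleIn D V
    · exact ⟨V, subset_rfl, hne, hV, hirr⟩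
    · simp only [IsIrreducibleIn, not_forall, not_not] at hirr
      obtain ⟨V', hV'V, hV'ne, hV'neV, hV'⟩ := hirr
      obtain ⟨U, hUV', hU⟩ :=
        ih V' (ssubset_of_subset_of_ne hV'V hV'neV) (hV.trans hV' hV'V) hV'ne
      exact ⟨U, hUV'.trans hV'V, hU⟩

end Matrix

open Matrix

variable {ι : Type*} [Fintype ι] {D : Matrix ι ι ℝ} {x : ι → ℝ}

theorem Matrix.exists_vecMul_eq_self_of_det_one_sub_eq_zero [DecidableEq ι]
    (h : (1 - D).det = 0) : ∃ x ≠ 0, x ᵥ* D = x := by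
  obtain ⟨x, hx0, hx⟩ := exists_vecMul_eq_zero_iff.mpr h
  rw [vecMul_sub, vecMul_one, sub_eq_zero] at hx
  exact ⟨x, hx0, hx.symm⟩

theorem sum_mul_abs_eq_and_abs_eq_of_vecMul_eq_self (hnonneg : ∀ i j, 0 ≤ D i j)
    (hcol : ∀ j, ∑ i, D i j ≤ 1) (hx : x ᵥ* D = x) {j : ι} (hj : ∀ i, |x i| ≤ |x j|) :
    (∑ i, D i j) * |x j| = |x j| ∧ ∀ i, D i j ≠ 0 → |x i| = |x j| := by
  have hterm : ∀ i ∈ univ, |x i| * D i j ≤ |x j| * D i j :=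
    fun i _ => mul_le_mul_of_nonneg_right (hj i) (hnonneg i j)
  have hupper : ∑ i, |x j| * D i j ≤ |x j| := by
    rw [← mul_sum]
    exact mul_le_of_le_one_right (abs_nonneg _) (hcol j)
  have hlower : |x j| ≤ ∑ i, |x i| * D i j :=
    calc |x j| = |∑ i, x i * D i j| := by rw [← congrFun hx j]; rfl
      _ ≤ ∑ i, |x i * D i j| := abs_sum_le_sum_abs _ _
      _ = ∑ i, |x i| * D i j := by simp only [abs_mul, abs_of_nonneg (hnonneg _ j)]
  have hsum : ∑ i, |x i| * D i j = ∑ i, |x j| * D i j :=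
    le_antisymm (sum_le_sum hterm) (by linarith)
  refine ⟨?_, fun i hi => ?_⟩
  · rw [sum_mul]
    simp_rw [mul_comm _ (|x j|)]
    linarith
  · exact mul_right_cancel₀ hi ((sum_eq_sum_iff_of_le hterm).mp hsum i (mem_univ i))

theorem exists_isIsolatedIn_of_vecMul_eq_self [DecidableEq ι] (hnonneg : ∀ i j, 0 ≤ D i j)
    (hcol : ∀ j, ∑ i, D i j ≤ 1) (hx : x ᵥ* D = x) (hx0 : x ≠ 0) :
    ∃ S : Finset ι, S.Nonempty ∧ IsIsolatedIn D univ S ∧ ∀ j ∈ S, ∑ i, D i j = 1 := by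
  obtain ⟨i₁, hi₁⟩ := Function.ne_iff.mp hx0
  obtain ⟨j₀, -, hj₀⟩ := exists_max_image univ (fun i => |x i|) ⟨i₁, mem_univ i₁⟩
  have hmax : ∀ i, |x i| ≤ |x j₀| := fun i => hj₀ i (mem_univ i)
  have hpos : 0 < |x j₀| := (abs_pos.mpr hi₁).trans_le (hmax i₁)
  have hexact := fun j (hj : |x j| = |x j₀|) =>
    sum_mul_abs_eq_and_abs_eq_of_vecMul_eq_self hnonneg hcol hx (j := j) (hj ▸ hmax)
  refine ⟨univ.filter (fun j => |x j| = |x j₀|), ⟨j₀, by simp⟩, ?_, ?_⟩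
  · intro v hv u hu
    simp only [mem_sdiff, mem_filter, mem_univ, true_and] at hv hu
    by_contra hvu
    exact hv ((hexact u hu).2 v hvu ▸ hu)
  · intro j hj
    simp only [mem_filter, mem_univ, true_and] at hj
    have h := (hexact j hj).1
    rw [hj] at h
    exact (mul_eq_right₀ hpos.ne').mp h

theorem stmt5_general (n : ℕ) (D : Matrix (Fin n) (Fin n) ℝ)
    (hent : ∀ i j, D i j ∈ Set.Icc (0:ℝ) 1)
    (hcol : ∀ j, ∑ i, D i j ≤ 1)
    (hunisolated : ¬ ∀ j, ∑ i, D i j = 1)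
    (hno : ∀ V : Finset (Fin n), V.Nonempty → V ≠ Finset.univ →
      ¬((∀ v ∉ V, ∀ u ∈ V, D v u = 0) ∧
        (∀ V' ⊆ V, V'.Nonempty → V' ≠ V →
          ¬(∀ v ∈ V \ V', ∀ u ∈ V', D v u = 0)))) :
    (1 - D).det ≠ 0 := by
  intro hdet
  obtain ⟨x, hx0, hx⟩ := exists_vecMul_eq_self_of_det_one_sub_eq_zero hdet
  obtain ⟨S, hSne, hSiso, hSsum⟩ :=
    exists_isIsolatedIn_of_vecMul_eq_self (fun i j => (hent i j).1) hcol hx hx0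
  obtain ⟨V, hVS, hVne, hViso, hVirr⟩ := hSiso.exists_subset_isIrreducibleIn hSne
  obtain ⟨j, hj⟩ := not_forall.mp hunisolated
  refine hno V hVne (fun hV => hj (hSsum j (hVS (hV ▸ mem_univ j)))) ⟨?_, hVirr⟩
  simpa [IsIsolatedIn] using hViso

/-- If D is unisolated and contains no strict nonempty isolated
irreducible subset, then det(I − D) ≠ 0. -/
theorem stmt5 (n : ℕ) (D : Matrix (Fin n) (Fin n) ℝ)
    (hent : ∀ i j, D i j ∈ Set.Icc (0:ℝ) 1)
    (hdiag : ∀ i, D i i = 0)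
    (hcol : ∀ j, ∑ i, D i j ≤ 1)
    (hunisolated : ¬ ∀ j, ∑ i, D i j = 1)
    (hno : ∀ V : Finset (Fin n), V.Nonempty → V ≠ Finset.univ →
      ¬((∀ v ∉ V, ∀ u ∈ V, D v u = 0) ∧
        (∀ V' ⊆ V, V'.Nonempty → V' ≠ V →
          ¬(∀ v ∈ V \ V', ∀ u ∈ V', D v u = 0)))) :
    (1 - D).det ≠ 0 :=
  stmt5_general n D hent hcol hunisolated hno
end

section
/- Let D be a k×k matrix with entries d_{ij} ∈ [0,1] and column sums ∑_i d_{ij} ≤ 1 for all j. If det(I − D) = 0 and, for every index j, the principal submatrix obtained by deleting row and column j satisfies det(I − D_{−j}) ≠ 0, then every column of D sums exactly to one. -/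
/-- If det(I − D) = 0 but every principal submatrix obtained by deleting
one index satisfies det(I − D_{−j}) ≠ 0, then every column of D sums to one. -/
theorem stmt6 (k : ℕ) (D : Matrix (Fin (k+1)) (Fin (k+1)) ℝ)
    (hent : ∀ i j, D i j ∈ Set.Icc (0:ℝ) 1)
    (hcol : ∀ j, ∑ i, D i j ≤ 1)
    (hdet : (1 - D).det = 0)
    (hsub : ∀ j : Fin (k+1),
      (1 - D.submatrix j.succAbove j.succAbove).det ≠ 0) :
    ∀ j, ∑ i, D i j = 1 := by
  obtain ⟨x, hx0, hxz⟩ := Matrix.exists_mulVec_eq_zero_iff.mpr hdet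
  -- x i = ∑ j, D i j * x j
  have hfix : ∀ i, x i = ∑ j, D i j * x j := by
    intro i
    rw [Matrix.sub_mulVec, Matrix.one_mulVec, sub_eq_zero] at hxz
    have := congrFun hxz i
    simpa [Matrix.mulVec, dotProduct] using this
  -- all entries of x nonzero
  have hne : ∀ j, x j ≠ 0 := by
    intro j hj
    apply hx0
    have hw : (1 - D.submatrix j.succAbove j.succAbove).mulVec (x ∘ j.succAbove) = 0 := by
      funext m
      have hx := hfix (j.succAbove m)
      rw [Fin.sum_univ_succAbove (fun l => D (j.succAbove m) l * x l) j] at hx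
      rw [Matrix.sub_mulVec, Matrix.one_mulVec]
      have hmv : ((D.submatrix j.succAbove j.succAbove).mulVec (x ∘ j.succAbove)) m
          = ∑ l, D (j.succAbove m) (j.succAbove l) * x (j.succAbove l) := by
        simp [Matrix.mulVec, dotProduct, Matrix.submatrix]
      simp only [Pi.sub_apply, Pi.zero_apply, hmv, Function.comp_apply]
      simp [hj] at hx
      linarith
    have := Matrix.eq_zero_of_mulVec_eq_zero (hsub j) hw
    funext i
    rcases eq_or_ne i j with rfl | h
    · exact hj
    · obtain ⟨m, hm⟩ := Fin.exists_succAbove_eq h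
      rw [← hm]
      simpa using congrFun this m
  -- sum inequality
  have key : ∑ j, (1 - ∑ i, D i j) * |x j| = 0 := by
    have h1 : ∑ i, |x i| ≤ ∑ j, (∑ i, D i j) * |x j| := by
      calc ∑ i, |x i| ≤ ∑ i, ∑ j, D i j * |x j| := by
            apply Finset.sum_le_sum
            intro i _
            rw [hfix i]
            refine (Finset.abs_sum_le_sum_abs _ _).trans ?_
            apply Finset.sum_le_sum
            intro j _
            rw [abs_mul, abs_of_nonneg (hent i j).1]
        _ = ∑ j, (∑ i, D i j) * |x j| := by
            rw [Finset.sum_comm]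
            simp [Finset.sum_mul]
    have : ∑ j, (1 - ∑ i, D i j) * |x j| ≤ 0 := by
      have := h1
      simp only [sub_mul, one_mul, Finset.sum_sub_distrib]
      linarith
    refine le_antisymm this ?_
    apply Finset.sum_nonneg
    intro j _
    exact mul_nonneg (by linarith [hcol j]) (abs_nonneg _)
  intro j
  have := (Finset.sum_eq_zero_iff_of_nonneg (fun j _ =>
    mul_nonneg (by linarith [hcol j]) (abs_nonneg _))).mp key j (Finset.mem_univ j)
  rcases mul_eq_zero.mp this with h | h
  · linarith
  · exact absurd (abs_eq_zero.mp h) (hne j)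
end

section
/- Let Λ be a column-stochastic n×n matrix with zero diagonal, and let V_1,…,V_k be its absorbing sets (equivalently, the isolated irreducible index subsets). Then every solution x of Λx = x vanishes on all indices outside V_1 ∪ ⋯ ∪ V_k, and the solution space of Λx = x has dimension exactly k, with one basis solution supported on each V_ℓ which can be chosen strictly positive on V_ℓ. -/
/-!
If `Λ x = x` then also `Λ |x| = |x|`, and the support of a nonnegative fixed vector is isolated
(no mass flows into it from outside). A nonempty isolated set contains a minimal one, which is
irreducible, hence one of the `V ℓ`; so a fixed vector vanishing at one chosen point `p ℓ` of
each `V ℓ` is zero. Each `V ℓ` carries a fixed vector, and the absolute value of one has isolated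
support inside `V ℓ`, equal to `V ℓ` by irreducibility. The resulting positive vectors `b ℓ`
have disjoint supports, so a fixed `x` is `∑ ℓ, (x (p ℓ) / b ℓ (p ℓ)) • b ℓ`.
-/

namespace Matrix

variable {ι : Type*}

section Isolation

variable {R : Type*} [Zero R] (Λ : Matrix ι ι R)

def IsIsolated (S : Set ι) : Prop :=
  ∀ v ∉ S, ∀ u ∈ S, Λ v u = 0

def IsIrreducibleOn (S : Set ι) : Prop :=
  ∀ W ⊆ S, W.Nonempty → W ≠ S → ¬ ∀ v ∈ S \ W, ∀ u ∈ W, Λ v u = 0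

variable {Λ}

theorem IsIsolated.of_isolated_within {W W' : Set ι} (hW : Λ.IsIsolated W) (hW' : W' ⊆ W)
    (h : ∀ v ∈ W \ W', ∀ u ∈ W', Λ v u = 0) : Λ.IsIsolated W' := by
  intro v hv u hu
  by_cases hvW : v ∈ W
  · exact h v ⟨hvW, hv⟩ u hu
  · exact hW v hvW u (hW' hu)

/-- A minimal nonempty isolated subset is irreducible. -/
theorem IsIsolated.exists_subset_isIrreducibleOn [Finite ι] {S : Set ι} (hS : Λ.IsIsolated S)
    (hne : S.Nonempty) :
    ∃ W ⊆ S, W.Nonempty ∧ Λ.IsIsolated W ∧ Λ.IsIrreducibleOn W := by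
  obtain ⟨W, hWS, ⟨hWne, hW⟩, hmin⟩ :=
    exists_minimal_le_of_wellFoundedLT (fun W : Set ι => W.Nonempty ∧ Λ.IsIsolated W) S ⟨hne, hS⟩
  refine ⟨W, hWS, hWne, hW, fun W' hW'W hW'ne hW'neq hW' => hW'neq ?_⟩
  exact le_antisymm hW'W (hmin ⟨hW'ne, hW.of_isolated_within hW'W hW'⟩ hW'W)

end Isolation

variable [Fintype ι] {Λ : Matrix ι ι ℝ} {x : ι → ℝ}

theorem isIsolated_support_of_nonneg (hΛ : ∀ i j, 0 ≤ Λ i j) (hx0 : 0 ≤ x) (hx : Λ *ᵥ x = x) :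
    Λ.IsIsolated (Function.support x) := by
  intro v hv u hu
  have hsum : ∑ w, Λ v w * x w = 0 := by
    simpa [mulVec, dotProduct, Function.notMem_support.1 hv] using congrFun hx v
  have hterm := (Finset.sum_eq_zero_iff_of_nonneg fun w _ => mul_nonneg (hΛ v w) (hx0 w)).1
    hsum u (Finset.mem_univ u)
  exact (mul_eq_zero.1 hterm).resolve_right hu

variable [DecidableEq ι]

/-- `|x| ≤ Λ |x|` pointwise, and a column-stochastic `Λ` preserves coordinate sums. -/
theorem abs_mulVec_eq_abs (hΛ : Λ ∈ colStochastic ℝ ι) (hx : Λ *ᵥ x = x) : Λ *ᵥ |x| = |x| := by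
  have hle : ∀ v ∈ Finset.univ, |x| v ≤ (Λ *ᵥ |x|) v := fun v _ => by
    calc |x| v = |(Λ *ᵥ x) v| := by rw [hx, Pi.abs_apply]
      _ ≤ ∑ u, |Λ v u * x u| := Finset.abs_sum_le_sum_abs _ _
      _ = (Λ *ᵥ |x|) v := by
        simp only [mulVec, dotProduct, abs_mul, abs_of_nonneg (nonneg_of_mem_colStochastic hΛ),
          Pi.abs_apply]
  exact funext fun v => ((Finset.sum_eq_sum_iff_of_le hle).1
    (sum_mulVec_of_mem_colStochastic hΛ).symm v (Finset.mem_univ v)).symm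

theorem isIsolated_support_of_mulVec_eq_self (hΛ : Λ ∈ colStochastic ℝ ι) (hx : Λ *ᵥ x = x) :
    Λ.IsIsolated (Function.support x) := by
  have h := isIsolated_support_of_nonneg (fun i j => nonneg_of_mem_colStochastic hΛ) (abs_nonneg x)
    (abs_mulVec_eq_abs hΛ hx)
  rwa [show Function.support |x| = Function.support x by ext; simp] at h

/-- The indicator row vector `r` of `S` satisfies `r ᵥ* (Λ D) = r` with `D = diagonal r`, so
`Λ D` has a nonzero fixed vector, which turns out to be supported on `S`. -/
theorem exists_mulVec_eq_self_of_isIsolated (hΛ : 1 ᵥ* Λ = 1) {S : Set ι} (hS : Λ.IsIsolated S)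
    (hne : S.Nonempty) : ∃ x ≠ 0, Λ *ᵥ x = x ∧ Function.support x ⊆ S := by
  set r : ι → ℝ := S.indicator 1
  have hr : r ᵥ* (Λ * diagonal r) = r := by
    ext u
    rw [← vecMul_vecMul, vecMul_diagonal]
    by_cases hu : u ∈ S
    · have : (r ᵥ* Λ) u = (1 ᵥ* Λ) u := Finset.sum_congr rfl fun v _ => by
        by_cases hv : v ∈ S
        · simp [r, hv]
        · simp [r, hv, hS v hv u hu]
      simp [this, hΛ, r, hu]
    · simp [r, hu]
  have hdet : (Λ * diagonal r - 1).det = 0 := by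
    refine exists_vecMul_eq_zero_iff.1 ⟨r, ?_, by rw [vecMul_sub, hr, vecMul_one, sub_self]⟩
    obtain ⟨s, hs⟩ := hne
    exact Function.ne_iff.2 ⟨s, by simp [r, hs]⟩
  obtain ⟨y, hy0, hy⟩ := exists_mulVec_eq_zero_iff.2 hdet
  rw [sub_mulVec, one_mulVec, sub_eq_zero, ← mulVec_mulVec] at hy
  have hyS : ∀ v ∉ S, y v = 0 := fun v hv => by
    rw [← hy]
    refine Finset.sum_eq_zero fun u _ => ?_
    by_cases hu : u ∈ S
    · simp [hS v hv u hu]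
    · simp [r, mulVec_diagonal, hu]
  have hDy : diagonal r *ᵥ y = y := funext fun v => by
    by_cases hv : v ∈ S
    · simp [r, mulVec_diagonal, hv]
    · simp [r, mulVec_diagonal, hv, hyS v hv]
  exact ⟨y, hy0, by rwa [hDy] at hy, fun v hv => by_contra fun h => hv (hyS v h)⟩

theorem exists_pos_mulVec_eq_self_of_isIrreducibleOn (hΛ : Λ ∈ colStochastic ℝ ι) {S : Set ι}
    (hS : Λ.IsIsolated S) (hirr : Λ.IsIrreducibleOn S) (hne : S.Nonempty) :
    ∃ x, Λ *ᵥ x = x ∧ (∀ v ∉ S, x v = 0) ∧ ∀ v ∈ S, 0 < x v := by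
  obtain ⟨x, hx0, hx, hxS⟩ :=
    exists_mulVec_eq_self_of_isIsolated (one_vecMul_of_mem_colStochastic hΛ) hS hne
  have hsupp : Function.support x = S := by
    by_contra hne'
    exact hirr _ hxS (Function.support_nonempty_iff.2 hx0) hne'
      fun v hv u hu => isIsolated_support_of_mulVec_eq_self hΛ hx v hv.2 u hu
  refine ⟨|x|, abs_mulVec_eq_abs hΛ hx, fun v hv => ?_, fun v hv => ?_⟩
  · simpa using Function.notMem_support.1 (hsupp ▸ hv : v ∉ Function.support x)
  · simpa using (hsupp ▸ hv : v ∈ Function.support x)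

/-- Otherwise the support of `x` is a nonempty isolated set, hence contains an absorbing set. -/
theorem eq_zero_of_mulVec_eq_self_of_apply_eq_zero {κ : Type*} (hΛ : Λ ∈ colStochastic ℝ ι)
    {V : κ → Set ι} (hall : ∀ W : Set ι, W.Nonempty → Λ.IsIsolated W → Λ.IsIrreducibleOn W →
      ∃ ℓ, W = V ℓ)
    {p : κ → ι} (hp : ∀ ℓ, p ℓ ∈ V ℓ) (hx : Λ *ᵥ x = x) (hxp : ∀ ℓ, x (p ℓ) = 0) : x = 0 := by
  by_contra hx0
  obtain ⟨W, hWx, hWne, hW, hWirr⟩ :=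
    (isIsolated_support_of_mulVec_eq_self hΛ hx).exists_subset_isIrreducibleOn
      (Function.support_nonempty_iff.2 hx0)
  obtain ⟨ℓ, rfl⟩ := hall W hWne hW hWirr
  exact hWx (hp ℓ) (hxp ℓ)

end Matrix

open Function in
theorem Finset.sum_smul_apply_of_pairwise_disjoint {ι κ R : Type*} [Fintype κ] [Semiring R]
    {V : κ → Set ι} (hV : Pairwise (Disjoint on V)) {b : κ → ι → R}
    (hb : ∀ ℓ, ∀ v ∉ V ℓ, b ℓ v = 0) (c : κ → R) {m : κ} {v : ι} (hv : v ∈ V m) :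
    (∑ ℓ, c ℓ • b ℓ) v = c m * b m v := by
  rw [Finset.sum_apply, Fintype.sum_eq_single m fun ℓ hℓ => ?_]
  · rfl
  · simp [hb ℓ v fun h => (hV hℓ).ne_of_mem h hv rfl]

open Matrix in
theorem stmt13_general (n k : ℕ) (Λ : Matrix (Fin n) (Fin n) ℝ)
    (hent : ∀ i j, Λ i j ∈ Set.Icc (0:ℝ) 1)
    (hcol : ∀ j, ∑ i, Λ i j = 1)
    (V : Fin k → Set (Fin n))
    (hVne : ∀ ℓ, (V ℓ).Nonempty)
    (hdisj : ∀ ℓ m, ℓ ≠ m → Disjoint (V ℓ) (V m))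
    (hiso : ∀ ℓ, ∀ v ∉ V ℓ, ∀ u ∈ V ℓ, Λ v u = 0)
    (hirr : ∀ ℓ, ∀ W ⊆ V ℓ, W.Nonempty → W ≠ V ℓ →
      ¬(∀ v ∈ V ℓ \ W, ∀ u ∈ W, Λ v u = 0))
    (hall : ∀ W : Set (Fin n), W.Nonempty →
      (∀ v ∉ W, ∀ u ∈ W, Λ v u = 0) →
      (∀ W' ⊆ W, W'.Nonempty → W' ≠ W →
        ¬(∀ v ∈ W \ W', ∀ u ∈ W', Λ v u = 0)) →
      ∃ ℓ, W = V ℓ) :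
    (∀ x : Fin n → ℝ, Λ.mulVec x = x → ∀ v, (∀ ℓ, v ∉ V ℓ) → x v = 0) ∧
    ∃ b : Fin k → (Fin n → ℝ),
      (∀ ℓ, Λ.mulVec (b ℓ) = b ℓ) ∧
      (∀ ℓ, ∀ v, v ∉ V ℓ → b ℓ v = 0) ∧
      (∀ ℓ, ∀ v ∈ V ℓ, 0 < b ℓ v) ∧
      (∀ x : Fin n → ℝ, Λ.mulVec x = x →
        ∃! c : Fin k → ℝ, x = ∑ ℓ, c ℓ • b ℓ) := by
  have hΛ : Λ ∈ colStochastic ℝ (Fin n) :=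
    mem_colStochastic_iff_sum.2 ⟨fun i j => (hent i j).1, hcol⟩
  choose b hbfix hbzero hbpos using fun ℓ =>
    exists_pos_mulVec_eq_self_of_isIrreducibleOn hΛ (hiso ℓ) (hirr ℓ) (hVne ℓ)
  choose p hp using hVne
  have heval : ∀ (c : Fin k → ℝ) m, (∑ ℓ, c ℓ • b ℓ) (p m) = c m * b m (p m) := fun c m =>
    Finset.sum_smul_apply_of_pairwise_disjoint (fun ℓ m h => hdisj ℓ m h) hbzero c (hp m)
  have hdecomp : ∀ x, Λ *ᵥ x = x → x = ∑ ℓ, (x (p ℓ) / b ℓ (p ℓ)) • b ℓ := fun x hx => by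
    refine sub_eq_zero.1 (eq_zero_of_mulVec_eq_self_of_apply_eq_zero hΛ hall hp ?_ fun m => ?_)
    · simp [mulVec_sub, mulVec_sum, mulVec_smul, hx, hbfix]
    · rw [Pi.sub_apply, heval, div_mul_cancel₀ _ (hbpos m _ (hp m)).ne', sub_self]
  refine ⟨fun x hx v hv => ?_, b, hbfix, hbzero, hbpos, fun x hx => ⟨_, hdecomp x hx, ?_⟩⟩
  · rw [hdecomp x hx, Finset.sum_apply]
    exact Finset.sum_eq_zero fun ℓ _ => by simp [hbzero ℓ v (hv ℓ)]
  · rintro c rfl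
    funext m
    rw [heval, mul_div_cancel_right₀ _ (hbpos m _ (hp m)).ne']

/-- Solutions of Λx = x vanish outside the absorbing sets, and the
solution space has dimension exactly k, with one basis solution per
absorbing set, strictly positive there. -/
theorem stmt13 (n k : ℕ) (Λ : Matrix (Fin n) (Fin n) ℝ)
    (hent : ∀ i j, Λ i j ∈ Set.Icc (0:ℝ) 1)
    (hdiag : ∀ i, Λ i i = 0)
    (hcol : ∀ j, ∑ i, Λ i j = 1)
    (V : Fin k → Set (Fin n))
    (hVne : ∀ ℓ, (V ℓ).Nonempty)
    (hdisj : ∀ ℓ m, ℓ ≠ m → Disjoint (V ℓ) (V m))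
    (hiso : ∀ ℓ, ∀ v ∉ V ℓ, ∀ u ∈ V ℓ, Λ v u = 0)
    (hirr : ∀ ℓ, ∀ W ⊆ V ℓ, W.Nonempty → W ≠ V ℓ →
      ¬(∀ v ∈ V ℓ \ W, ∀ u ∈ W, Λ v u = 0))
    (hall : ∀ W : Set (Fin n), W.Nonempty →
      (∀ v ∉ W, ∀ u ∈ W, Λ v u = 0) →
      (∀ W' ⊆ W, W'.Nonempty → W' ≠ W →
        ¬(∀ v ∈ W \ W', ∀ u ∈ W', Λ v u = 0)) →
      ∃ ℓ, W = V ℓ) :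
    (∀ x : Fin n → ℝ, Λ.mulVec x = x → ∀ v, (∀ ℓ, v ∉ V ℓ) → x v = 0) ∧
    ∃ b : Fin k → (Fin n → ℝ),
      (∀ ℓ, Λ.mulVec (b ℓ) = b ℓ) ∧
      (∀ ℓ, ∀ v, v ∉ V ℓ → b ℓ v = 0) ∧
      (∀ ℓ, ∀ v ∈ V ℓ, 0 < b ℓ v) ∧
      (∀ x : Fin n → ℝ, Λ.mulVec x = x →
        ∃! c : Fin k → ℝ, x = ∑ ℓ, c ℓ • b ℓ) :=
  stmt13_general n k Λ hent hcol V hVne hdisj hiso hirr hall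
end

section
/- Let Λ be a column-stochastic n×n matrix with zero diagonal and let q ∈ ℝ^n with q_v > 0 for all v. If the index set contains at least one isolated irreducible subset (equivalently, Λx = x has a nonzero nonnegative solution), then the maximum solution x* to Λx = x subject to x ≤ q is nonzero and satisfies x*_v = q_v for at least one index v (some constraint binds). -/
/-!
The solutions of `Λx = x` form a subspace `S`, and `xs` is the greatest element of
`S ∩ {x ≤ q}`. Column sums equal to one make `1` a left eigenvalue of `Λ`, hence an
eigenvalue, so `S` contains some `y ≠ 0`. Since `q > 0`, a small positive multiple of `y`
or of `-y` lies below `q`, hence below `xs`, which forces `xs i > 0` for some `i`. If no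
constraint were binding, then `t • xs ≤ q` for some `t > 1`, so `t • xs ≤ xs`, which is
impossible at that `i`.
-/

open Filter Topology

theorem exists_gt_smul_le {ι : Type*} [Finite ι] {y q : ι → ℝ} {t₀ : ℝ}
    (h : ∀ i, t₀ * y i < q i) : ∃ t > t₀, t • y ≤ q := by
  have hev : ∀ᶠ t in 𝓝[>] t₀, ∀ i, t * y i < q i :=
    eventually_all.2 fun i => nhdsWithin_le_nhds <|
      (continuous_id.mul continuous_const).continuousAt.eventually_lt continuousAt_const (h i)
  obtain ⟨t, ht, ht₀⟩ := (hev.and self_mem_nhdsWithin).exists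
  exact ⟨t, ht₀, fun i => (ht i).le⟩

section MaximalElement

variable {ι : Type*} [Finite ι] {S : Submodule ℝ (ι → ℝ)} {q xs : ι → ℝ}

theorem exists_pos_apply_of_isGreatest (hq : ∀ i, 0 < q i) (hxs : IsGreatest (S ∩ Set.Iic q) xs)
    {y : ι → ℝ} (hyS : y ∈ S) (hy : y ≠ 0) : ∃ i, 0 < xs i := by
  obtain ⟨i, hi⟩ := Function.ne_iff.mp hy
  wlog hyi : 0 < y i generalizing y
  · exact this (S.neg_mem hyS) (neg_ne_zero.2 hy) (by simpa using hi)
      (by simpa using lt_of_le_of_ne (not_lt.1 hyi) hi)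
  obtain ⟨t, ht, hty⟩ := exists_gt_smul_le (y := y) (t₀ := 0) (by simpa using hq)
  have : t • y ≤ xs := hxs.2 ⟨S.smul_mem t hyS, hty⟩
  exact ⟨i, (mul_pos ht hyi).trans_le (this i)⟩

theorem exists_apply_eq_of_isGreatest (hxs : IsGreatest (S ∩ Set.Iic q) xs)
    {i₀ : ι} (hi₀ : 0 < xs i₀) : ∃ i, xs i = q i := by
  by_contra! hne
  obtain ⟨t, ht, htxs⟩ := exists_gt_smul_le (y := xs) (t₀ := 1)
    fun i => by simpa using lt_of_le_of_ne (hxs.1.2 i) (hne i)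
  have hle : t • xs ≤ xs := hxs.2 ⟨S.smul_mem t hxs.1.1, htxs⟩
  exact (lt_mul_of_one_lt_left hi₀ ht).not_ge (hle i₀)

end MaximalElement

theorem Matrix.det_sub_one_eq_zero_of_sum_col_eq_one {ι K : Type*} [Fintype ι] [DecidableEq ι]
    [Nonempty ι] [Field K] {A : Matrix ι ι K} (hA : ∀ j, ∑ i, A i j = 1) : (A - 1).det = 0 := by
  refine Matrix.exists_vecMul_eq_zero_iff.1 ⟨1, one_ne_zero, ?_⟩
  rw [Matrix.vecMul_sub, Matrix.vecMul_one, sub_eq_zero]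
  ext j
  simp [Matrix.vecMul, dotProduct, hA]

theorem stmt19_general (n : ℕ) (Λ : Matrix (Fin n) (Fin n) ℝ)
    (hcol : ∀ j, ∑ i, Λ i j = 1)
    (q : Fin n → ℝ) (hq : ∀ v, 0 < q v)
    (hexists : ∃ V : Finset (Fin n), V.Nonempty ∧
      (∀ v ∉ V, ∀ u ∈ V, Λ v u = 0) ∧
      (∀ W ⊆ V, W.Nonempty → W ≠ V →
        ¬(∀ v ∈ V \ W, ∀ u ∈ W, Λ v u = 0)))
    (xs : Fin n → ℝ)
    (hmax : Λ.mulVec xs = xs ∧ 0 ≤ xs ∧ xs ≤ q ∧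
      ∀ x : Fin n → ℝ, Λ.mulVec x = x → x ≤ q → x ≤ xs) :
    xs ≠ 0 ∧ ∃ v, xs v = q v := by
  obtain ⟨hfix, -, hxsq, hbest⟩ := hmax
  obtain ⟨V, ⟨v, -⟩, -⟩ := hexists
  have : Nonempty (Fin n) := ⟨v⟩
  let S := LinearMap.ker (Λ - 1).mulVecLin
  have mem_S_iff : ∀ x, x ∈ S ↔ Λ.mulVec x = x := fun x => by
    simp [S, sub_eq_zero]
  have hxs : IsGreatest (S ∩ Set.Iic q) xs :=
    ⟨⟨(mem_S_iff xs).2 hfix, hxsq⟩, fun x ⟨hxS, hxq⟩ => hbest x ((mem_S_iff x).1 hxS) hxq⟩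
  obtain ⟨y, hy, hyS⟩ :=
    Matrix.exists_mulVec_eq_zero_iff.2 (Matrix.det_sub_one_eq_zero_of_sum_col_eq_one hcol)
  obtain ⟨i, hi⟩ := exists_pos_apply_of_isGreatest hq hxs hyS hy
  exact ⟨fun h => by simp [h] at hi, exists_apply_eq_of_isGreatest hxs hi⟩

/-- If the index set contains an isolated irreducible subset and q is
strictly positive, then the maximum solution of Λx = x subject to
x ≤ q is nonzero and some constraint binds. -/
theorem stmt19 (n : ℕ) (Λ : Matrix (Fin n) (Fin n) ℝ)
    (hent : ∀ i j, Λ i j ∈ Set.Icc (0:ℝ) 1)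
    (hdiag : ∀ i, Λ i i = 0)
    (hcol : ∀ j, ∑ i, Λ i j = 1)
    (q : Fin n → ℝ) (hq : ∀ v, 0 < q v)
    (hexists : ∃ V : Finset (Fin n), V.Nonempty ∧
      (∀ v ∉ V, ∀ u ∈ V, Λ v u = 0) ∧
      (∀ W ⊆ V, W.Nonempty → W ≠ V →
        ¬(∀ v ∈ V \ W, ∀ u ∈ W, Λ v u = 0)))
    (xs : Fin n → ℝ)
    (hmax : Λ.mulVec xs = xs ∧ 0 ≤ xs ∧ xs ≤ q ∧
      ∀ x : Fin n → ℝ, Λ.mulVec x = x → x ≤ q → x ≤ xs) :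
    xs ≠ 0 ∧ ∃ v, xs v = q v :=
  stmt19_general n Λ hcol q hq hexists xs hmax
end
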